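/- Let P be a partition of N with associated p ∈ Δ_N. If every block A ∈ P with |A| > 1 and every i ∈ A satisfy w(A) ≥ w({i}) + w(A∖{i}), then p is a local maximizer of W, i.e., W(p) ≥ W(q_i | p_{−i}) for every i ∈ N and every q_i ∈ Δ_i. -/

import Mathlib

/-!
The `A`-summand of `W` is the multilinear extension of `w` on the subsets of `A`, evaluated at
the column `(q_j^A)_j`. By Möbius inversion it equals `w T` at the `0/1` column with support
`T ⊆ A`, and it is affine in each coordinate. Hence, with `p_{-i}` fixed, `W(q_i | p_{-i})` is
affine in `q_i`: the coefficient of `q_i^A` is the marginal worth of `i` in `A` under `p`, namely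
`w A - w (A ∖ {i})` if `A` is the block of `i` and `w {i} - w ∅` for every other `A ∋ i`. The
hypothesis makes the block's coefficient the largest one, so the vertex `p_i` maximizes this
linear function over `Δ_i`.
-/

open Finset

/-- Möbius inversion of a set function `w : 2^N → ℝ`:
`μ^w(A) = ∑_{B ⊆ A} (−1)^{|A∖B|} w(B)`. -/
def mobius {n : ℕ} (w : Finset (Fin n) → ℝ) (A : Finset (Fin n)) : ℝ :=
  ∑ B ∈ A.powerset, (-1 : ℝ) ^ (A.card - B.card) * w B

/-- `qi` is a membership distribution for element `i`: nonnegative, supported on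
the subsets containing `i`, and summing to `1` over them. -/
def coordDist {n : ℕ} (i : Fin n) (qi : Finset (Fin n) → ℝ) : Prop :=
  (∀ A, 0 ≤ qi A) ∧ (∀ A, i ∉ A → qi A = 0) ∧
    ∑ A ∈ Finset.univ.filter (fun A => i ∈ A), qi A = 1

/-- A fuzzy cover `q ∈ Δ_N`. -/
def fuzzyCover {n : ℕ} (q : Fin n → Finset (Fin n) → ℝ) : Prop :=
  ∀ i, coordDist i (q i)

/-- Global worth `W(q) = ∑_{A⊆N} ∑_{B⊆A} (∏_{i∈B} q_i^A) μ^w(B)`. -/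
def W {n : ℕ} (w : Finset (Fin n) → ℝ) (q : Fin n → Finset (Fin n) → ℝ) : ℝ :=
  ∑ A : Finset (Fin n), ∑ B ∈ A.powerset, (∏ i ∈ B, q i A) * mobius w B


/-- The point of `Δ_N` associated to a partition `P` of `N`:
`p_i^A = 1` iff `A` is the block of `P` containing `i`. -/
def partPoint {n : ℕ} (P : Finpartition (Finset.univ : Finset (Fin n))) :
    Fin n → Finset (Fin n) → ℝ :=
  fun i A => if A ∈ P.parts ∧ i ∈ A then 1 else 0

lemma sum_Icc_neg_one_pow_card_sub {α : Type*} [DecidableEq α] {C A : Finset α} (hCA : C ⊆ A) :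
    ∑ B ∈ Icc C A, (-1 : ℝ) ^ (#B - #C) = if C = A then 1 else 0 := by
  have hdisj : ∀ D ∈ (A \ C).powerset, Disjoint C D := fun D hD =>
    disjoint_of_subset_right (mem_powerset.1 hD) disjoint_sdiff
  have hinj : Set.InjOn (C ∪ ·) (A \ C).powerset := fun D hD D' hD' h => by
    rw [← union_sdiff_cancel_left (hdisj D hD), ← union_sdiff_cancel_left (hdisj D' hD')]
    exact congrArg (· \ C) h
  rw [Icc_eq_image_powerset hCA, sum_image hinj,
    sum_congr rfl fun D hD => by
      rw [card_union_of_disjoint (hdisj D hD), Nat.add_sub_cancel_left]]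
  have halt := congrArg (Int.cast : ℤ → ℝ) (sum_powerset_neg_one_pow_card (x := A \ C))
  push_cast at halt
  rw [halt]
  have hempty : A \ C = ∅ ↔ C = A :=
    sdiff_eq_empty_iff_subset.trans ⟨hCA.antisymm, fun h => h ▸ subset_rfl⟩
  exact if_congr hempty rfl rfl

open Function

section Multilinear

variable {n : ℕ} (w : Finset (Fin n) → ℝ)

lemma sum_powerset_mobius (A : Finset (Fin n)) : ∑ B ∈ A.powerset, mobius w B = w A := by
  unfold mobius
  rw [sum_comm' (t' := A.powerset) (s' := fun C => Icc C A) fun B C => by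
    simp only [mem_powerset, mem_Icc]
    exact ⟨fun h => ⟨⟨h.2, h.1⟩, h.2.trans h.1⟩, fun h => ⟨h.1.2, h.1.1⟩⟩]
  simp_rw [← sum_mul]
  rw [sum_congr rfl fun C hC => by rw [sum_Icc_neg_one_pow_card_sub (mem_powerset.1 hC)]]
  simp

def multilinearExt (A : Finset (Fin n)) (x : Fin n → ℝ) : ℝ :=
  ∑ B ∈ A.powerset, (∏ j ∈ B, x j) * mobius w B

lemma W_eq_sum_multilinearExt (q : Fin n → Finset (Fin n) → ℝ) :
    W w q = ∑ A, multilinearExt w A (fun j => q j A) :=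
  rfl

lemma multilinearExt_of_indicator {A T : Finset (Fin n)} (hT : T ⊆ A) {x : Fin n → ℝ}
    (hx : ∀ j ∈ A, x j = if j ∈ T then 1 else 0) : multilinearExt w A x = w T := by
  have hprod : ∀ B ∈ A.powerset, ∏ j ∈ B, x j = if B ⊆ T then 1 else 0 := fun B hB => by
    rw [prod_congr rfl fun j hj => hx j (mem_powerset.1 hB hj), prod_boole]
    rfl
  have hfilter : A.powerset.filter (· ⊆ T) = T.powerset := by
    ext B
    simp only [mem_filter, mem_powerset]
    exact ⟨And.right, fun h => ⟨h.trans hT, h⟩⟩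
  rw [multilinearExt, sum_congr rfl fun B hB => by rw [hprod B hB, boole_mul], ← sum_filter,
    hfilter, sum_powerset_mobius]

lemma multilinearExt_update (A : Finset (Fin n)) (x : Fin n → ℝ) (i : Fin n) (t : ℝ) :
    multilinearExt w A (update x i t) = multilinearExt w A (update x i 0) +
      t * (multilinearExt w A (update x i 1) - multilinearExt w A (update x i 0)) := by
  simp only [multilinearExt, mul_sub, mul_sum, ← sum_sub_distrib, ← sum_add_distrib]
  refine sum_congr rfl fun B _ => ?_
  by_cases hi : i ∈ B
  · simp only [prod_update_of_mem hi]
    ring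
  · simp only [prod_update_of_notMem hi]
    ring

def marginalWorth (q : Fin n → Finset (Fin n) → ℝ) (i : Fin n) (A : Finset (Fin n)) : ℝ :=
  multilinearExt w A (update (fun j => q j A) i 1) -
    multilinearExt w A (update (fun j => q j A) i 0)

lemma W_update (q : Fin n → Finset (Fin n) → ℝ) (i : Fin n) (qi : Finset (Fin n) → ℝ) :
    W w (update q i qi) = W w (update q i 0) + ∑ A, qi A * marginalWorth w q i A := by
  have hcol : ∀ (r : Finset (Fin n) → ℝ) A,
      (fun j => update q i r j A) = update (fun j => q j A) i (r A) :=
    fun r A => funext fun j => apply_update (fun _ f => f A) q i r j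
  simp only [W_eq_sum_multilinearExt, hcol, Pi.zero_apply, ← sum_add_distrib]
  exact sum_congr rfl fun A _ => multilinearExt_update w A _ i (qi A)

lemma sum_mul_le_of_coordDist {i : Fin n} {qi : Finset (Fin n) → ℝ} (hqi : coordDist i qi)
    {f : Finset (Fin n) → ℝ} {c : ℝ} (hf : ∀ A, i ∈ A → f A ≤ c) :
    ∑ A, qi A * f A ≤ c := by
  obtain ⟨hnonneg, hsupp, hsum⟩ := hqi
  calc ∑ A, qi A * f A = ∑ A with i ∈ A, qi A * f A :=
        (sum_subset (filter_subset _ _) fun A _ hA => by simp [hsupp A (by simpa using hA)]).symm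
    _ ≤ ∑ A with i ∈ A, qi A * c :=
        sum_le_sum fun A hA => mul_le_mul_of_nonneg_left (hf A (mem_filter.1 hA).2) (hnonneg A)
    _ = c := by rw [← sum_mul, hsum, one_mul]

end Multilinear

section Partition

variable {n : ℕ} (w : Finset (Fin n) → ℝ) (P : Finpartition (univ : Finset (Fin n)))

lemma partPoint_eq_ite_part (i : Fin n) (A : Finset (Fin n)) :
    partPoint P i A = if P.part i = A then 1 else 0 := by
  refine if_congr ⟨fun h => (P.part_eq_iff_mem h.1).2 h.2, ?_⟩ rfl rfl
  rintro rfl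
  exact ⟨P.part_mem.2 (mem_univ i), P.mem_part_self.2 (mem_univ i)⟩

lemma sum_partPoint_mul (i : Fin n) (f : Finset (Fin n) → ℝ) :
    ∑ A, partPoint P i A * f A = f (P.part i) := by
  simp [partPoint_eq_ite_part]

lemma marginalWorth_partPoint {i : Fin n} {A : Finset (Fin n)} (hi : i ∈ A) :
    marginalWorth w (partPoint P) i A =
      if A ∈ P.parts then w A - w (A.erase i) else w {i} - w ∅ := by
  split_ifs with hA
  · rw [marginalWorth, multilinearExt_of_indicator w subset_rfl,
      multilinearExt_of_indicator w (erase_subset i A)]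
    all_goals intro j hj; rcases eq_or_ne j i with rfl | hji <;> simp [partPoint, *]
  · rw [marginalWorth, multilinearExt_of_indicator w (singleton_subset_iff.2 hi),
      multilinearExt_of_indicator w (empty_subset A)]
    all_goals intro j hj; rcases eq_or_ne j i with rfl | hji <;> simp [partPoint, *]

lemma marginalWorth_partPoint_le (hw : w ∅ = 0)
    (h : ∀ A ∈ P.parts, 1 < A.card → ∀ i ∈ A, w {i} + w (A.erase i) ≤ w A)
    {i : Fin n} {A : Finset (Fin n)} (hi : i ∈ A) :
    marginalWorth w (partPoint P) i A ≤ marginalWorth w (partPoint P) i (P.part i) := by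
  have hB : P.part i ∈ P.parts := P.part_mem.2 (mem_univ i)
  have hiB : i ∈ P.part i := P.mem_part_self.2 (mem_univ i)
  rw [marginalWorth_partPoint w P hi, marginalWorth_partPoint w P hiB, if_pos hB]
  split_ifs with hA
  · rw [P.part_eq_of_mem hA hi]
  rcases (one_le_card.2 ⟨i, hiB⟩).lt_or_eq with hcard | hcard
  · linarith [h _ hB hcard i hiB]
  · obtain ⟨a, ha⟩ := card_eq_one.1 hcard.symm
    rw [ha, mem_singleton] at hiB
    rw [ha, hiB, erase_singleton]

end Partition

/-- if every block `A ∈ P` with `|A| > 1` and every `i ∈ A` satisfy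
`w(A) ≥ w({i}) + w(A∖{i})`, then the point `p` associated to `P` is a local
maximizer of `W`. -/
theorem partition_local_maximizer {n : ℕ} (w : Finset (Fin n) → ℝ) (hw : w ∅ = 0)
    (P : Finpartition (Finset.univ : Finset (Fin n)))
    (h : ∀ A ∈ P.parts, 1 < A.card → ∀ i ∈ A, w {i} + w (A.erase i) ≤ w A) :
    ∀ i : Fin n, ∀ qi : Finset (Fin n) → ℝ, coordDist i qi →
      W w (Function.update (partPoint P) i qi) ≤ W w (partPoint P) := by
  intro i qi hqi
  have hp : W w (partPoint P) = W w (update (partPoint P) i 0) +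
      marginalWorth w (partPoint P) i (P.part i) := by
    conv_lhs => rw [← update_eq_self i (partPoint P)]
    rw [W_update, sum_partPoint_mul]
  rw [W_update, hp, add_le_add_iff_left]
  exact sum_mul_le_of_coordDist hqi fun A hA => marginalWorth_partPoint_le w P hw h hA
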